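/- arXiv:1004.4082 — 4 statements merged into one kernel-verified Lean document; each statement's English description precedes it below -/
import Mathlib

section
/- Let L be a finite lattice and P ⊆ L a subset such that the map ψ : a ↦ {p ∈ P : p ≤ a} is a semilattice isomorphism from L onto the lattice of ⋁-ideals of the partial semilattice (P, ⋁). Then P contains every nonzero join-irreducible element of L. -/
/-- A `⋁`-ideal of the partial semilattice determined by a subset `P` of a
lattice `L`: an order ideal of `P` closed under all (nonempty finite) joins
that land in `P`. -/
def VIdeal {L : Type*} [Lattice L] (P : Set L) (A : Set L) : Prop :=
  A ⊆ P ∧ (∀ a ∈ A, ∀ b ∈ P, b ≤ a → b ∈ A) ∧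
    ∀ (X : Finset L) (hX : X.Nonempty), (X : Set L) ⊆ A →
      X.sup' hX id ∈ P → X.sup' hX id ∈ A

/-!
Since `ψ` reflects the order, every `q` is the join of the finitely many `p ∈ P` below it.
A join-irreducible element that is the join of a finite set belongs to that set.
-/

theorem SupIrred.finset_sup'_eq {ι α : Type*} [SemilatticeSup α] {a : α} (ha : SupIrred a)
    {s : Finset ι} (hs : s.Nonempty) {f : ι → α} (h : s.sup' hs f = a) : ∃ i ∈ s, f i = a := by
  induction hs using Finset.Nonempty.cons_induction with
  | singleton i => exact ⟨i, Finset.mem_singleton_self i, h⟩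
  | cons i s _ hs ih =>
    rw [Finset.sup'_cons hs] at h
    rcases ha.2 h with hfi | hsup
    · exact ⟨i, Finset.mem_cons_self i s, hfi⟩
    · obtain ⟨j, hj, hfj⟩ := ih hsup
      exact ⟨j, Finset.mem_cons_of_mem hj, hfj⟩

theorem SupIrred.mem_of_isLUB {α : Type*} [SemilatticeSup α] {a : α} {s : Set α}
    (ha : SupIrred a) (hs : s.Finite) (hlub : IsLUB s a) : a ∈ s := by
  obtain rfl | hne := s.eq_empty_or_nonempty
  · exact absurd (isLUB_empty_iff.1 hlub).isMin ha.not_isMin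
  have hne' : hs.toFinset.Nonempty := hs.toFinset_nonempty.2 hne
  have hsup : hs.toFinset.sup' hne' id = a :=
    (Finset.isLUB_sup' hne').unique (by simpa using hlub)
  obtain ⟨b, hb, rfl⟩ := ha.finset_sup'_eq hne' hsup
  exact hs.mem_toFinset.1 hb

theorem isLUB_sep_le_of_subset_imp_le {α : Type*} [Preorder α] {P : Set α}
    (hP : ∀ a b : α, {p ∈ P | p ≤ a} ⊆ {p ∈ P | p ≤ b} → a ≤ b) (q : α) :
    IsLUB {p ∈ P | p ≤ q} q :=
  ⟨fun _ hp => hp.2, fun _ hb => hP _ _ fun _ hp => ⟨hp.1, hb hp⟩⟩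

theorem join_irreducibles_subset_general {L : Type*} [Lattice L] [Fintype L]
    (P : Set L)
    (hiso : ∀ a b : L, a ≤ b ↔ {p ∈ P | p ≤ a} ⊆ {p ∈ P | p ≤ b}) :
    ∀ q : L, SupIrred q → q ∈ P := fun q hq =>
  (hq.mem_of_isLUB (Set.toFinite _)
    (isLUB_sep_le_of_subset_imp_le (fun a b => (hiso a b).2) q)).1

/-- If `L` is a finite lattice, `P ⊆ L`, and `ψ : a ↦ {p ∈ P | p ≤ a}` is a
semilattice isomorphism of `L` onto the `⋁`-ideals of `(P, ⋁)` (an order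
isomorphism onto `Id(P,⋁)`), then `P` contains every nonzero join-irreducible
element of `L`. -/
theorem join_irreducibles_subset {L : Type*} [Lattice L] [Fintype L]
    (P : Set L)
    (hiso : ∀ a b : L, a ≤ b ↔ {p ∈ P | p ≤ a} ⊆ {p ∈ P | p ≤ b})
    (hsurj : ∀ A : Set L, VIdeal P A → A.Nonempty → ∃ a : L, {p ∈ P | p ≤ a} = A) :
    ∀ q : L, SupIrred q → q ∈ P :=
  join_irreducibles_subset_general P hiso
end

section
/- Let F and T be distributive lattices with F finite, and suppose the set J₀(F) of join-irreducibles of F together with the bottom element is closed under binary meets. Then every meet-preserving map φ̄ : J₀(F) → T extends to a lattice homomorphism Φ : F → T given by Φ(x) = ⋁{φ̄(s) : s ∈ J₀(F), s ≤ x}. -/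
/-!
`Φ x` is the join of `φ s` over the finitely many `s ∈ J₀(F)` below `x`. Since every element of
`J₀(F)` is join-prime, an `s ∈ J₀(F)` below `x ⊔ y` lies below `x` or below `y`, so `Φ` preserves
joins. For meets, distributivity of `T` expands `Φ x ⊓ Φ y` into the join of the `φ s ⊓ φ t`; each
of these equals `φ (s ⊓ t)`, and `s ⊓ t` is again an element of `J₀(F)`, now below `x ⊓ y`.
-/

open Set

section

variable {F T : Type*}

theorem monotoneOn_of_map_inf [SemilatticeInf F] [SemilatticeInf T] {J : Set F} {φ : F → T}
    (hφ : ∀ s ∈ J, ∀ t ∈ J, φ (s ⊓ t) = φ s ⊓ φ t) : MonotoneOn φ J := by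
  intro s hs t ht hst
  calc φ s = φ (s ⊓ t) := by rw [inf_eq_left.2 hst]
    _ = φ s ⊓ φ t := hφ s hs t ht
    _ ≤ φ t := inf_le_right

theorem le_or_le_of_le_sup_of_supIrred_or_eq_bot [DistribLattice F] [OrderBot F] {s x y : F}
    (hs : SupIrred s ∨ s = ⊥) (hsxy : s ≤ x ⊔ y) : s ≤ x ∨ s ≤ y := by
  rcases hs with hirr | rfl
  · exact hirr.supPrime.2 hsxy
  · exact Or.inl bot_le

section Preorder

variable [Preorder F] [Finite F] {J : Set F}

noncomputable def finsetBelow (J : Set F) (x : F) : Finset F :=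
  (Set.toFinite (J ∩ Iic x)).toFinset

theorem mem_finsetBelow {x s : F} : s ∈ finsetBelow J x ↔ s ∈ J ∧ s ≤ x :=
  Set.Finite.mem_toFinset _

theorem finsetBelow_nonempty [OrderBot F] (hbot : ⊥ ∈ J) (x : F) : (finsetBelow J x).Nonempty :=
  ⟨⊥, mem_finsetBelow.2 ⟨hbot, bot_le⟩⟩

variable [OrderBot F] [SemilatticeSup T] {hbot : ⊥ ∈ J} {φ : F → T}

noncomputable def supExtension (J : Set F) (hbot : ⊥ ∈ J) (φ : F → T) (x : F) : T :=
  (finsetBelow J x).sup' (finsetBelow_nonempty hbot x) φ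

theorem supExtension_le_iff {x : F} {b : T} :
    supExtension J hbot φ x ≤ b ↔ ∀ s ∈ J, s ≤ x → φ s ≤ b := by
  simp only [supExtension, Finset.sup'_le_iff, mem_finsetBelow, and_imp]

theorem le_supExtension {x s : F} (hs : s ∈ J) (hsx : s ≤ x) : φ s ≤ supExtension J hbot φ x :=
  Finset.le_sup' φ (mem_finsetBelow.2 ⟨hs, hsx⟩)

theorem isLUB_supExtension (x : F) :
    IsLUB (φ '' (J ∩ Iic x)) (supExtension J hbot φ x) := by
  refine isLUB_iff_le_iff.2 fun b => supExtension_le_iff.trans ?_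
  simp only [mem_upperBounds, mem_image, mem_inter_iff, mem_Iic]
  aesop

theorem supExtension_mono : Monotone (supExtension J hbot φ) :=
  fun _ _ hxy => supExtension_le_iff.2 fun _ hs hsx => le_supExtension hs (hsx.trans hxy)

theorem supExtension_of_mem (hφ : MonotoneOn φ J) {s : F} (hs : s ∈ J) :
    supExtension J hbot φ s = φ s :=
  le_antisymm (supExtension_le_iff.2 fun _ ht hts => hφ ht hs hts) (le_supExtension hs le_rfl)

end Preorder

theorem supExtension_sup [Lattice F] [OrderBot F] [Finite F] [SemilatticeSup T] {J : Set F}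
    {hbot : ⊥ ∈ J} {φ : F → T} (hprime : ∀ s ∈ J, ∀ x y : F, s ≤ x ⊔ y → s ≤ x ∨ s ≤ y)
    (x y : F) :
    supExtension J hbot φ (x ⊔ y) = supExtension J hbot φ x ⊔ supExtension J hbot φ y := by
  refine le_antisymm (supExtension_le_iff.2 fun s hs hsxy => ?_)
    (sup_le (supExtension_mono le_sup_left) (supExtension_mono le_sup_right))
  rcases hprime s hs x y hsxy with hsx | hsy
  · exact le_sup_of_le_left (le_supExtension hs hsx)
  · exact le_sup_of_le_right (le_supExtension hs hsy)

theorem supExtension_inf [Lattice F] [OrderBot F] [Finite F] [DistribLattice T] {J : Set F}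
    {hbot : ⊥ ∈ J} {φ : F → T} (hmeet : ∀ s ∈ J, ∀ t ∈ J, s ⊓ t ∈ J)
    (hφ : ∀ s ∈ J, ∀ t ∈ J, φ (s ⊓ t) = φ s ⊓ φ t) (x y : F) :
    supExtension J hbot φ (x ⊓ y) = supExtension J hbot φ x ⊓ supExtension J hbot φ y := by
  refine le_antisymm (le_inf (supExtension_mono inf_le_left) (supExtension_mono inf_le_right)) ?_
  rw [supExtension, supExtension, Finset.sup'_inf_sup', Finset.sup'_le_iff]
  rintro ⟨s, t⟩ hst
  obtain ⟨⟨hs, hsx⟩, ⟨ht, hty⟩⟩ :=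
    And.imp mem_finsetBelow.1 mem_finsetBelow.1 (Finset.mem_product.1 hst)
  rw [← hφ s hs t ht]
  exact le_supExtension (hmeet s hs t ht) (inf_le_inf hsx hty)

end

/-- Let `F` and `T` be distributive lattices with `F` finite, and suppose the
set `J₀(F)` of join-irreducibles of `F` together with the bottom element is
closed under binary meets. Then every meet-preserving map `φ : J₀(F) → T`
extends to a lattice homomorphism `Φ : F → T` given by
`Φ x = ⋁ {φ s | s ∈ J₀(F), s ≤ x}`. -/
theorem extend_meet_map_to_hom {F T : Type*}
    [DistribLattice F] [Fintype F] [OrderBot F] [DistribLattice T]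
    (J0 : Set F) (hJ0 : J0 = {s : F | SupIrred s ∨ s = ⊥})
    (hmeet : ∀ s ∈ J0, ∀ t ∈ J0, s ⊓ t ∈ J0)
    (φ : F → T)
    (hφ : ∀ s ∈ J0, ∀ t ∈ J0, φ (s ⊓ t) = φ s ⊓ φ t) :
    ∃ Φ : F → T,
      (∀ x y : F, Φ (x ⊔ y) = Φ x ⊔ Φ y) ∧
      (∀ x y : F, Φ (x ⊓ y) = Φ x ⊓ Φ y) ∧
      (∀ s ∈ J0, Φ s = φ s) ∧
      (∀ x : F, IsLUB {t : T | ∃ s ∈ J0, s ≤ x ∧ t = φ s} (Φ x)) := by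
  subst hJ0
  have hbot : (⊥ : F) ∈ {s : F | SupIrred s ∨ s = ⊥} := Or.inr rfl
  refine ⟨supExtension _ hbot φ,
    supExtension_sup fun s hs _ _ => le_or_le_of_le_sup_of_supIrred_or_eq_bot hs,
    supExtension_inf hmeet hφ,
    fun s => supExtension_of_mem (monotoneOn_of_map_inf hφ),
    fun x => ?_⟩
  convert isLUB_supExtension x using 1
  ext t
  simp only [mem_ofPred_eq, mem_image, mem_inter_iff, mem_Iic, and_assoc, eq_comm]
end

section
/- Let X be a set with r elements. If s subsets A₁,…,A_s of X are chosen independently and uniformly at random, the probability that the Boolean subalgebra of the power set of X generated by A₁,…,A_s is the whole power set equals ∏_{k=1}^{r-1} (2^s − k)/2^s. -/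
/-- Membership in the Boolean subalgebra generated by a set `S`. -/
inductive BoolGen {B : Type*} [BooleanAlgebra B] (S : Set B) : B → Prop
  | base {x : B} : x ∈ S → BoolGen S x
  | bot : BoolGen S ⊥
  | top : BoolGen S ⊤
  | sup {x y : B} : BoolGen S x → BoolGen S y → BoolGen S (x ⊔ y)
  | inf {x y : B} : BoolGen S x → BoolGen S y → BoolGen S (x ⊓ y)
  | compl {x : B} : BoolGen S x → BoolGen S xᶜ

/-!
Record a family `A : ι → Set X` by its columns `x ↦ (i ↦ x ∈ A i)`. Two points with the same
column lie in exactly the same generated sets, so generating everything forces the columns to be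
distinct. Conversely, if they are distinct, each singleton `{x}` is the intersection of those
`A i` and `(A i)ᶜ` that contain `x`, and every subset of the finite set `X` is a finite union of
singletons. Hence the generating `s`-tuples correspond to the injections `X ↪ (Fin s → Prop)`,
of which there are `2^s (2^s - 1) ⋯ (2^s - r + 1)`.
-/

namespace BoolGen

variable {X ι : Type*} {A : ι → Set X}

theorem mem_iff_mem_of_forall {a b : X} (hab : ∀ i, a ∈ A i ↔ b ∈ A i) {Z : Set X}
    (hZ : BoolGen (Set.range A) Z) : a ∈ Z ↔ b ∈ Z := by
  induction hZ with
  | base h =>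
    obtain ⟨i, rfl⟩ := h
    exact hab i
  | bot => exact Iff.rfl
  | top => exact Iff.rfl
  | sup _ _ h₁ h₂ => exact or_congr h₁ h₂
  | inf _ _ h₁ h₂ => exact and_congr h₁ h₂
  | compl _ h => exact not_congr h

theorem singleton_of_injective [Fintype ι] (hA : Function.Injective fun x i => x ∈ A i)
    (x : X) : BoolGen (Set.range A) {x} := by
  classical
  have hx : ({x} : Set X) = Finset.univ.inf fun i => if x ∈ A i then A i else (A i)ᶜ := by
    ext y
    simp only [Set.mem_singleton_iff, Finset.inf_eq_iInf, Finset.mem_univ, iInf_pos,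
      Set.iInf_eq_iInter, Set.mem_iInter]
    refine ⟨fun hyx i => ?_, fun hy => hA (funext fun i => propext ?_)⟩
    · subst hyx
      split_ifs with h <;> exact h
    · specialize hy i
      split_ifs at hy with h <;> simpa [h] using hy
  rw [hx]
  refine Finset.inf_induction top (fun _ h₁ _ h₂ => inf h₁ h₂) fun i _ => ?_
  split_ifs
  · exact base ⟨i, rfl⟩
  · exact compl (base ⟨i, rfl⟩)

theorem of_finite {S : Set (Set X)} (hS : ∀ x, BoolGen S {x}) {Y : Set X} (hY : Y.Finite) :
    BoolGen S Y := by
  induction Y, hY using Set.Finite.induction_on with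
  | empty => exact bot
  | @insert a Y _ _ h =>
    rw [Set.insert_eq]
    exact sup (hS a) h

end BoolGen

theorem forall_boolGen_range_iff_injective {X ι : Type*} [Finite X] [Fintype ι]
    (A : ι → Set X) :
    (∀ Y : Set X, BoolGen (Set.range A) Y) ↔ Function.Injective fun x i => x ∈ A i := by
  refine ⟨fun h a b hab => ?_, fun hA Y => ?_⟩
  · have hb : b ∈ ({a} : Set X) :=
      (BoolGen.mem_iff_mem_of_forall (fun i => Iff.of_eq (congrFun hab i)) (h {a})).mp rfl
    exact hb.symm
  · exact BoolGen.of_finite (BoolGen.singleton_of_injective hA) Y.toFinite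

theorem card_generating_finset_tuples (X ι : Type*) [Fintype X] [Fintype ι] :
    Nat.card {A : ι → Finset X // ∀ Y : Set X, BoolGen (Set.range fun i => (A i : Set X)) Y}
      = (2 ^ Fintype.card ι).descFactorial (Fintype.card X) := by
  classical
  let columns : (ι → Finset X) ≃ (X → ι → Prop) :=
    (Equiv.piCongrRight fun _ => (Fintype.finsetEquivSet : Finset X ≃ (X → Prop))).trans
      (Equiv.piComm _)
  have e : {A : ι → Finset X // ∀ Y : Set X, BoolGen (Set.range fun i => (A i : Set X)) Y}
      ≃ (X ↪ (ι → Prop)) :=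
    (columns.subtypeEquiv fun A => forall_boolGen_range_iff_injective _).trans
      (Equiv.subtypeInjectiveEquivEmbedding _ _)
  rw [Nat.card_congr e, Nat.card_eq_fintype_card, Fintype.card_embedding_eq, Fintype.card_fun,
    Fintype.card_prop]

theorem Nat.cast_descFactorial_div_pow {K : Type*} [Field K] {n : ℕ} (hn : (n : K) ≠ 0)
    (r : ℕ) : (n.descFactorial r : K) / n ^ r = ∏ k ∈ Finset.Ico 1 r, ((n : K) - k) / n := by
  rw [← descPochhammer_eval_eq_descFactorial, descPochhammer_eval_eq_prod_range,
    Finset.pow_eq_prod_const, ← Finset.prod_div_distrib]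
  rcases Nat.eq_zero_or_pos r with rfl | hr
  · simp
  · rw [Finset.prod_range_eq_mul_Ico _ hr, Nat.cast_zero, sub_zero, div_self hn, one_mul]

theorem probability_generating_powerset_general {X : Type*} [Fintype X]
    (s r : ℕ) (hr : Fintype.card X = r) :
    (Nat.card {A : Fin s → Finset X //
        ∀ Y : Set X, BoolGen (Set.range fun i => ((A i : Set X))) Y} : ℚ)
        / 2 ^ (s * r)
      = ∏ k ∈ Finset.Ico 1 r, (((2 : ℚ) ^ s - k) / 2 ^ s) := by
  rw [card_generating_finset_tuples, Fintype.card_fin, hr, pow_mul]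
  exact_mod_cast Nat.cast_descFactorial_div_pow (K := ℚ) (by positivity) r

/-- If `s` subsets `A₁, …, A_s` of an `r`-element set `X` are chosen
independently and uniformly at random, the probability that they generate the
whole power set of `X` as a Boolean subalgebra is
`∏_{k=1}^{r-1} (2^s - k)/2^s`. -/
theorem probability_generating_powerset {X : Type*} [Fintype X] [DecidableEq X]
    (s r : ℕ) (hr : Fintype.card X = r) :
    (Nat.card {A : Fin s → Finset X //
        ∀ Y : Set X, BoolGen (Set.range fun i => ((A i : Set X))) Y} : ℚ)
        / 2 ^ (s * r)
      = ∏ k ∈ Finset.Ico 1 r, (((2 : ℚ) ^ s - k) / 2 ^ s) :=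
  probability_generating_powerset_general s r hr
end

section
/- For a finite poset (P, ≤) with t order filters (including ∅ and P), there exists a family of subsets (A_p)_{p∈P} of a finite set X with p ≤ q ⟺ A_p ⊆ A_q, such that the Boolean subalgebra of 2^X generated by the A_p has exactly t atoms; hence the free Boolean algebra generated by (P, ≤) has 2^t elements. -/
/-!
Take `X` to be the set of order filters of `P` (enumerated by `Fin t`) and `A p = {F | p ∈ F}`.
The profile `{p | x ∈ A p}` of a point `x` is the filter `x` itself, so the nonempty
intersections `⋂ A_p^{δ_p}`, which are indexed by the profiles, correspond to the `t` filters.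
Distinct points have distinct profiles, so each such intersection is a singleton and every subset
of `X` is generated. The order is recovered because `p ≤ q` is witnessed by the filter `Ici p`.
-/

open Set Function

namespace BoolGen

variable {B : Type*} [CompleteBooleanAlgebra B] {S : Set B}

theorem iSup {ι : Type*} [Finite ι] {f : ι → B} (h : ∀ i, BoolGen S (f i)) :
    BoolGen S (⨆ i, f i) := by
  have := Fintype.ofFinite ι
  rw [← Finset.sup_univ_eq_iSup]
  exact Finset.sup_induction bot (fun _ ha _ hb => sup ha hb) fun i _ => h i

theorem iInf {ι : Type*} [Finite ι] {f : ι → B} (h : ∀ i, BoolGen S (f i)) :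
    BoolGen S (⨅ i, f i) := by
  have := Fintype.ofFinite ι
  rw [← Finset.inf_univ_eq_iInf]
  exact Finset.inf_induction top (fun _ ha _ hb => inf ha hb) fun i _ => h i

end BoolGen

section Profile

variable {ι X : Type*}

theorem singleton_eq_iInter_of_injective_profile {A : ι → Set X}
    (hA : Injective fun x i => x ∈ A i) (x : X) :
    ({x} : Set X) = ⋂ i, {y | y ∈ A i ↔ x ∈ A i} := by
  ext y
  simp only [mem_singleton_iff, mem_iInter, mem_ofPred_eq, ← hA.eq_iff, funext_iff, eq_iff_iff]

theorem boolGen_of_injective_profile [Finite ι] [Finite X] {A : ι → Set X}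
    (hA : Injective fun x i => x ∈ A i) (Y : Set X) : BoolGen (range A) Y := by
  have hatom (x : X) : BoolGen (range A) {x} := by
    rw [singleton_eq_iInter_of_injective_profile hA x]
    refine BoolGen.iInf fun i => ?_
    by_cases hx : x ∈ A i
    · simpa only [hx, iff_true, ofPred_mem_eq] using BoolGen.base (mem_range_self i)
    · simpa only [hx, iff_false, ← compl_ofPred, ofPred_mem_eq] using
        BoolGen.compl (BoolGen.base (mem_range_self i))
  rw [← iUnion_of_singleton_coe Y]
  exact BoolGen.iSup fun x : Y => hatom x

theorem setOf_nonempty_iInter_eq_range (A : ι → Set X) :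
    {δ : ι → Prop | (⋂ i, {x | x ∈ A i ↔ δ i}).Nonempty} = range fun x i => x ∈ A i := by
  ext δ
  simp only [mem_ofPred_eq, mem_range, nonempty_def, mem_iInter, funext_iff, eq_iff_iff]

end Profile

theorem le_iff_forall_isUpperSet {P : Type*} [Preorder P] {p q : P} :
    p ≤ q ↔ ∀ F ∈ {F : Set P | IsUpperSet F}, p ∈ F → q ∈ F :=
  ⟨fun hpq _ hF hp => hF hpq hp, fun h => h (Ici p) (isUpperSet_Ici p) self_mem_Ici⟩

theorem exists_injective_fin_range_eq {α : Type*} {s : Set α} [Finite s] {n : ℕ}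
    (hs : s.ncard = n) : ∃ φ : Fin n → α, Injective φ ∧ range φ = s := by
  let e := (Finite.equivFinOfCardEq ((Nat.card_coe_set_eq s).trans hs)).symm
  refine ⟨Subtype.val ∘ e, Subtype.val_injective.comp e.injective, ?_⟩
  rw [range_comp, e.range_eq_univ, image_univ, Subtype.range_coe]

/-- For a finite poset `P` with `t` order filters (including `∅` and `P`),
there is a family of subsets `(A_p)` of a finite set `X` realizing the order
(`p ≤ q ↔ A_p ⊆ A_q`) such that the generated Boolean subalgebra of `2^X`
has exactly `t` atoms (the nonempty intersections `⋂_p A_p^{δ_p}`), and hence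
the free Boolean algebra generated by `(P, ≤)` has `2^t` elements. -/
theorem free_boolean_algebra_card {P : Type*} [PartialOrder P] [Fintype P]
    (t : ℕ) (ht : {F : Set P | IsUpperSet F}.ncard = t) :
    ∃ (X : Type) (_ : Fintype X) (A : P → Set X),
      (∀ p q : P, p ≤ q ↔ A p ⊆ A q) ∧
      {δ : P → Prop | (⋂ p : P, {x : X | x ∈ A p ↔ δ p}).Nonempty}.ncard = t ∧
      {Y : Set X | BoolGen (Set.range A) Y}.ncard = 2 ^ t := by
  obtain ⟨φ, hφ, hφ_range⟩ := exists_injective_fin_range_eq ht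
  refine ⟨Fin t, inferInstance, fun p => {x | p ∈ φ x}, fun p q => ?_, ?_, ?_⟩
  · rw [le_iff_forall_isUpperSet, ← hφ_range, forall_mem_range]
    rfl
  · rw [setOf_nonempty_iInter_eq_range]
    exact (congrArg ncard hφ_range).trans ht
  · have hall : {Y : Set (Fin t) | BoolGen (range fun p => {x | p ∈ φ x}) Y} = univ :=
      eq_univ_of_forall (boolGen_of_injective_profile hφ)
    rw [hall, ncard_univ, Nat.card_eq_fintype_card, Fintype.card_set, Fintype.card_fin]
end
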